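/- Let b ∈ C¹_♯(Y_d)^d with flow X, let u₀ ∈ C¹(ℝ^d), and assume there exists ζ ∈ ℝ^d such that X(t,x)/t → ζ as t → ∞ for every x ∈ ℝ^d. For ε > 0 define u_ε(t,x) := u₀(ε X(t/ε, x/ε)), which is the solution of the transport equation ∂u_ε/∂t − b(x/ε)·∇u_ε = 0 on (0,∞)×ℝ^d with initial datum u_ε(0,·) = u₀. Then u_ε converges, as ε → 0, strongly in L^p_loc([0,∞)×ℝ^d) for every p ∈ [1,∞), to the function (t,x) ↦ u₀(x + tζ): i.e., for every compact K ⊂ [0,∞)×ℝ^d and every p ∈ [1,∞), ∫_K |u_ε(t,x) − u₀(x + tζ)|^p dt dx → 0 as ε → 0. -/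

import Mathlib

/-!
The deviation `D(t,x) = X(t,x) - x - tζ` is a cocycle over the flow,
`D(s+t,x) = D(t, X(s,x)) + D(s,x)`, and is `ℤ^d`-periodic in `x`. The pointwise sublinearity of
`D(·,x)`, spread to neighbourhoods by continuity and then over the compact unit cube, yields a
bounded range `[1,τ]` of times `T` with `‖D(T,x)‖ ≤ ηT` available at every `x`; chaining such
times along the cocycle gives `‖D(t,x)‖ ≤ ηt + C` uniformly in `x`. Hence
`εX(t/ε,x/ε) = x + tζ + εD(t/ε,x/ε) → x + tζ` uniformly on compact sets, and uniform continuity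
of `u₀` on a compact neighbourhood of the limit makes the integrand uniformly small.
-/

open MeasureTheory Filter Matrix

noncomputable section

/-- A function on `ℝ^d` is `ℤ^d`-periodic. -/
def ZdPeriodic {d : ℕ} {E : Type*} (f : (Fin d → ℝ) → E) : Prop :=
  ∀ (κ : Fin d → ℤ) (x : Fin d → ℝ), f (x + fun i => (κ i : ℝ)) = f x

/-- The unit cube `[0,1)^d`, a fundamental domain for the torus `Y_d = ℝ^d/ℤ^d`. -/
def unitCube (d : ℕ) : Set (Fin d → ℝ) := {x | ∀ i, x i ∈ Set.Ico (0 : ℝ) 1}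

/-- `X` is the global flow of the vector field `b`: `∂X/∂t(t,x) = b(X(t,x))`, `X(0,x) = x`. -/
def IsFlowOf {d : ℕ} (b : (Fin d → ℝ) → (Fin d → ℝ))
    (X : ℝ → (Fin d → ℝ) → (Fin d → ℝ)) : Prop :=
  ∀ x : Fin d → ℝ, X 0 x = x ∧ ∀ t : ℝ, HasDerivAt (fun s => X s x) (b (X t x)) t

/-- A measure `μ` on the torus `Y_d` (identified with a measure on `ℝ^d` carried by the unit
cube) is invariant for the flow `X`: `∫ ψ(X(t,y)) dμ = ∫ ψ dμ` for all `t` and all continuous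
`ℤ^d`-periodic `ψ`. -/
def FlowInvariant {d : ℕ} (X : ℝ → (Fin d → ℝ) → (Fin d → ℝ))
    (μ : Measure (Fin d → ℝ)) : Prop :=
  ∀ (t : ℝ) (ψ : (Fin d → ℝ) → ℝ), Continuous ψ → ZdPeriodic ψ →
    ∫ y, ψ (X t y) ∂μ = ∫ y, ψ y ∂μ

/-- Herman's rotation set `C_b = {∫ b dμ : μ invariant probability measure for the flow}`. -/
def rotationSet {d : ℕ} (b : (Fin d → ℝ) → (Fin d → ℝ))
    (X : ℝ → (Fin d → ℝ) → (Fin d → ℝ)) : Set (Fin d → ℝ) :=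
  {ζ | ∃ μ : Measure (Fin d → ℝ), IsProbabilityMeasure μ ∧ μ (unitCube d)ᶜ = 0 ∧
        FlowInvariant X μ ∧ ζ = ∫ y, b y ∂μ}

/-- The gradient of a scalar function on `ℝ^d`. -/
def grad {d : ℕ} (ψ : (Fin d → ℝ) → ℝ) (y : Fin d → ℝ) : Fin d → ℝ :=
  fun i => fderiv ℝ ψ y (Pi.single i 1)

open Set Topology

section Periodic

variable {d : ℕ} {E : Type*}

theorem ZdPeriodic.apply_fract {f : (Fin d → ℝ) → E} (hf : ZdPeriodic f) (x : Fin d → ℝ) :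
    f x = f fun i => Int.fract (x i) := by
  have hx : x = (fun i => Int.fract (x i)) + fun i => ((⌊x i⌋ : ℤ) : ℝ) :=
    funext fun i => (Int.fract_add_floor (x i)).symm
  conv_lhs => rw [hx]
  exact hf _ _

theorem fract_mem_Icc (x : Fin d → ℝ) : (fun i => Int.fract (x i)) ∈ Icc (0 : Fin d → ℝ) 1 :=
  ⟨fun _ => Int.fract_nonneg _, fun _ => (Int.fract_lt_one _).le⟩

theorem ZdPeriodic.exists_norm_le [SeminormedAddCommGroup E] {f : (Fin d → ℝ) → E}
    (hf : ZdPeriodic f) (hcont : Continuous f) : ∃ C, ∀ x, ‖f x‖ ≤ C := by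
  obtain ⟨C, hC⟩ := isCompact_Icc.exists_bound_of_continuousOn hcont.continuousOn
  exact ⟨C, fun x => hf.apply_fract x ▸ hC _ (fract_mem_Icc x)⟩

theorem ZdPeriodic.fderiv [NormedAddCommGroup E] [NormedSpace ℝ E] {f : (Fin d → ℝ) → E}
    (hf : ZdPeriodic f) : ZdPeriodic (fderiv ℝ f) := fun κ x => by
  rw [← fderiv_comp_add_right, funext fun y => hf κ y]

theorem ZdPeriodic.exists_lipschitzWith [NormedAddCommGroup E] [NormedSpace ℝ E]
    {f : (Fin d → ℝ) → E} (hf : ZdPeriodic f) (hC1 : ContDiff ℝ 1 f) :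
    ∃ L, LipschitzWith L f := by
  obtain ⟨C, hC⟩ := hf.fderiv.exists_norm_le (hC1.continuous_fderiv one_ne_zero)
  exact ⟨C.toNNReal, lipschitzWith_of_nnnorm_fderiv_le (hC1.differentiable one_ne_zero)
    fun x => by simpa only [norm_toNNReal] using Real.toNNReal_mono (hC x)⟩

end Periodic

theorem norm_le_mul_add_of_cocycle {α E : Type*} [SeminormedAddCommGroup E] {φ : ℝ → α → α}
    {D : ℝ → α → E} (hD : ∀ s t x, 0 ≤ s → 0 ≤ t → D (s + t) x = D t (φ s x) + D s x)
    {η C τ : ℝ} (hη : 0 ≤ η) (hC : ∀ t x, 0 ≤ t → t ≤ τ → ‖D t x‖ ≤ C)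
    (hT : ∀ x, ∃ T ∈ Icc 1 τ, ‖D T x‖ ≤ η * T) {t : ℝ} (ht : 0 ≤ t) (x : α) :
    ‖D t x‖ ≤ η * t + C := by
  suffices h : ∀ n : ℕ, ∀ (t : ℝ) x, 0 ≤ t → t ≤ n → ‖D t x‖ ≤ η * t + C from
    h ⌈t⌉₊ t x ht (Nat.le_ceil t)
  intro n
  induction n with
  | zero =>
    intro t x ht htn
    obtain ⟨T, ⟨hT1, hTτ⟩, -⟩ := hT x
    have := hC t x ht (by push_cast at htn; linarith)
    nlinarith
  | succ n ih =>
    intro t x ht htn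
    by_cases htτ : t ≤ τ
    · nlinarith [hC t x ht htτ]
    obtain ⟨T, ⟨hT1, hTτ⟩, hDT⟩ := hT x
    have hrest := ih (t - T) (φ T x) (by linarith) (by push_cast at htn; linarith)
    calc ‖D t x‖ = ‖D (t - T) (φ T x) + D T x‖ := by
          rw [← hD _ _ _ (by linarith) (by linarith), add_sub_cancel]
      _ ≤ η * (t - T) + C + η * T := (norm_add_le _ _).trans (add_le_add hrest hDT)
      _ = η * t + C := by ring

section Flow

variable {d : ℕ}

def flowDeviation (X : ℝ → (Fin d → ℝ) → (Fin d → ℝ)) (ζ : Fin d → ℝ) (t : ℝ) (x : Fin d → ℝ) :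
    Fin d → ℝ :=
  X t x - x - t • ζ

theorem eventually_norm_flowDeviation_lt {X : ℝ → (Fin d → ℝ) → (Fin d → ℝ)} {ζ x : Fin d → ℝ}
    (hζ : Tendsto (fun t : ℝ => t⁻¹ • X t x) atTop (𝓝 ζ)) {η : ℝ} (hη : 0 < η) :
    ∀ᶠ t in atTop, ‖flowDeviation X ζ t x‖ < η * t := by
  have hlim : Tendsto (fun t : ℝ => t⁻¹ • flowDeviation X ζ t x) atTop (𝓝 0) := by
    have := (hζ.sub ((tendsto_inv_atTop_zero (𝕜 := ℝ)).smul_const x)).sub_const ζ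
    rw [zero_smul, sub_zero, sub_self] at this
    refine this.congr' ?_
    filter_upwards [eventually_ne_atTop 0] with t ht
    simp [flowDeviation, smul_sub, smul_smul, inv_mul_cancel₀ ht]
  filter_upwards [(NormedAddGroup.tendsto_nhds_zero.1 hlim) η hη, eventually_gt_atTop 0]
    with t hsmall ht
  rwa [norm_smul, norm_inv, Real.norm_of_nonneg ht.le, inv_mul_lt_iff₀ ht, mul_comm] at hsmall

namespace IsFlowOf

variable {b : (Fin d → ℝ) → (Fin d → ℝ)} {X : ℝ → (Fin d → ℝ) → (Fin d → ℝ)} {L : NNReal}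
  {B : ℝ} {ζ : Fin d → ℝ}

theorem continuous_time (hX : IsFlowOf b X) (x : Fin d → ℝ) : Continuous fun t => X t x :=
  continuous_iff_continuousAt.2 fun t => ((hX x).2 t).continuousAt

theorem lipschitzWith_space (hX : IsFlowOf b X) (hL : LipschitzWith L b) {t : ℝ} (ht : 0 ≤ t) :
    LipschitzWith (Real.exp (L * t)).toNNReal (X t) := by
  refine LipschitzWith.of_dist_le_mul fun x y => ?_
  have hgronwall := dist_le_of_trajectories_ODE (v := fun _ => b) (fun _ => hL)
    (hX.continuous_time x).continuousOn (fun s _ => ((hX x).2 s).hasDerivWithinAt)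
    (hX.continuous_time y).continuousOn (fun s _ => ((hX y).2 s).hasDerivWithinAt)
    (by rw [(hX x).1, (hX y).1]) t ⟨ht, le_rfl⟩
  rw [Real.coe_toNNReal _ (Real.exp_nonneg _), mul_comm]
  simpa only [sub_zero] using hgronwall

theorem eq_of_hasDerivAt (hX : IsFlowOf b X) (hL : LipschitzWith L b) {γ : ℝ → (Fin d → ℝ)}
    (hγ : ∀ r, HasDerivAt γ (b (γ r)) r) {t : ℝ} (ht : 0 ≤ t) : γ t = X t (γ 0) :=
  ODE_solution_unique (v := fun _ => b) (fun _ => hL)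
    (continuous_iff_continuousAt.2 fun r => (hγ r).continuousAt).continuousOn
    (fun r _ => (hγ r).hasDerivWithinAt) (hX.continuous_time _).continuousOn
    (fun r _ => ((hX _).2 r).hasDerivWithinAt) (hX _).1.symm ⟨ht, le_rfl⟩

theorem add_apply (hX : IsFlowOf b X) (hL : LipschitzWith L b) (s : ℝ) {t : ℝ} (ht : 0 ≤ t)
    (x : Fin d → ℝ) : X (s + t) x = X t (X s x) := by
  have hγ : ∀ r, HasDerivAt (fun r => X (s + r) x) (b (X (s + r) x)) r := fun r =>
    ((hX x).2 (s + r)).comp_const_add s r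
  simpa using hX.eq_of_hasDerivAt hL hγ ht

theorem apply_add_intCast (hX : IsFlowOf b X) (hL : LipschitzWith L b) (hbper : ZdPeriodic b)
    {t : ℝ} (ht : 0 ≤ t) (x : Fin d → ℝ) (κ : Fin d → ℤ) :
    X t (x + fun i => (κ i : ℝ)) = X t x + fun i => (κ i : ℝ) := by
  have hγ : ∀ r, HasDerivAt (fun r => X r x + fun i => (κ i : ℝ))
      (b (X r x + fun i => (κ i : ℝ))) r := fun r => by
    rw [hbper]
    exact ((hX x).2 r).add_const _
  simpa [(hX x).1] using (hX.eq_of_hasDerivAt hL hγ ht).symm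

theorem norm_apply_sub_le (hX : IsFlowOf b X) (hB : ∀ y, ‖b y‖ ≤ B) {t : ℝ} (ht : 0 ≤ t)
    (x : Fin d → ℝ) : ‖X t x - x‖ ≤ B * t := by
  have := Convex.norm_image_sub_le_of_norm_hasDerivWithin_le (f := fun s => X s x)
    (fun s _ => ((hX x).2 s).hasDerivWithinAt) (fun s _ => hB _) convex_univ
    (mem_univ 0) (mem_univ t)
  simpa [(hX x).1, abs_of_nonneg ht] using this

theorem flowDeviation_add (hX : IsFlowOf b X) (hL : LipschitzWith L b) (s : ℝ) {t : ℝ}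
    (ht : 0 ≤ t) (x : Fin d → ℝ) :
    flowDeviation X ζ (s + t) x = flowDeviation X ζ t (X s x) + flowDeviation X ζ s x := by
  simp only [flowDeviation, hX.add_apply hL s ht, add_smul]
  abel

theorem zdPeriodic_flowDeviation (hX : IsFlowOf b X) (hL : LipschitzWith L b)
    (hbper : ZdPeriodic b) {t : ℝ} (ht : 0 ≤ t) : ZdPeriodic (flowDeviation X ζ t) := by
  intro κ x
  simp only [flowDeviation, hX.apply_add_intCast hL hbper ht]
  abel

theorem norm_flowDeviation_le (hX : IsFlowOf b X) (hB : ∀ y, ‖b y‖ ≤ B) {t : ℝ}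
    (ht : 0 ≤ t) (x : Fin d → ℝ) : ‖flowDeviation X ζ t x‖ ≤ (B + ‖ζ‖) * t := by
  calc ‖flowDeviation X ζ t x‖ ≤ ‖X t x - x‖ + ‖t • ζ‖ := _root_.norm_sub_le _ _
    _ ≤ B * t + t * ‖ζ‖ := by
        rw [norm_smul, Real.norm_of_nonneg ht]
        exact add_le_add_left (hX.norm_apply_sub_le hB ht x) _
    _ = (B + ‖ζ‖) * t := by ring

theorem exists_bounded_good_times (hX : IsFlowOf b X) (hL : LipschitzWith L b)
    (hbper : ZdPeriodic b) (hζ : ∀ x, Tendsto (fun t : ℝ => t⁻¹ • X t x) atTop (𝓝 ζ))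
    {η : ℝ} (hη : 0 < η) : ∃ τ, ∀ x, ∃ T ∈ Icc 1 τ, ‖flowDeviation X ζ T x‖ ≤ η * T := by
  have hgood : ∀ y, ∃ T, 1 ≤ T ∧ ‖flowDeviation X ζ T y‖ < η * T := fun y =>
    ((eventually_norm_flowDeviation_lt (hζ y) hη).and (eventually_ge_atTop 1)).exists.imp
      fun _ h => ⟨h.2, h.1⟩
  choose T hT1 hTy using hgood
  let U y := {z | ‖flowDeviation X ζ (T y) z‖ < η * T y}
  have hUopen : ∀ y, IsOpen (U y) := fun y =>
    isOpen_lt ((((hX.lipschitzWith_space hL (zero_le_one.trans (hT1 y))).continuous.sub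
      continuous_id).sub continuous_const).norm) continuous_const
  obtain ⟨S, hS⟩ := isCompact_Icc.elim_finite_subcover U hUopen
    fun y _ => mem_iUnion.2 ⟨y, hTy y⟩
  refine ⟨∑ y ∈ S, T y, fun x => ?_⟩
  obtain ⟨y, hyS, hxy⟩ := mem_iUnion₂.1 (hS (fract_mem_Icc x))
  have hT0 : ∀ z ∈ S, 0 ≤ T z := fun z _ => zero_le_one.trans (hT1 z)
  refine ⟨T y, ⟨hT1 y, Finset.single_le_sum hT0 hyS⟩, ?_⟩
  rw [(hX.zdPeriodic_flowDeviation hL hbper (zero_le_one.trans (hT1 y))).apply_fract x]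
  exact hxy.le

theorem exists_norm_flowDeviation_le (hX : IsFlowOf b X) (hL : LipschitzWith L b)
    (hbper : ZdPeriodic b) (hB : ∀ y, ‖b y‖ ≤ B)
    (hζ : ∀ x, Tendsto (fun t : ℝ => t⁻¹ • X t x) atTop (𝓝 ζ)) {η : ℝ} (hη : 0 < η) :
    ∃ C, ∀ t x, 0 ≤ t → ‖flowDeviation X ζ t x‖ ≤ η * t + C := by
  obtain ⟨τ, hτ⟩ := hX.exists_bounded_good_times hL hbper hζ hη
  have hBζ : 0 ≤ B + ‖ζ‖ := add_nonneg ((norm_nonneg _).trans (hB 0)) (norm_nonneg _)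
  refine ⟨(B + ‖ζ‖) * τ, fun t x ht => norm_le_mul_add_of_cocycle
    (fun s t x _ ht => hX.flowDeviation_add hL s ht x) hη.le (fun t x ht htτ => ?_) hτ ht x⟩
  exact (hX.norm_flowDeviation_le hB ht x).trans (mul_le_mul_of_nonneg_left htτ hBζ)

theorem tendstoUniformlyOn_rescaled (hX : IsFlowOf b X) (hL : LipschitzWith L b)
    (hbper : ZdPeriodic b) (hB : ∀ y, ‖b y‖ ≤ B)
    (hζ : ∀ x, Tendsto (fun t : ℝ => t⁻¹ • X t x) atTop (𝓝 ζ))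
    {K : Set (ℝ × (Fin d → ℝ))} {R : ℝ} (hK : ∀ q ∈ K, q.1 ∈ Icc 0 R) :
    TendstoUniformlyOn (fun ε q => ε • X (q.1 / ε) (ε⁻¹ • q.2)) (fun q => q.2 + q.1 • ζ)
      (𝓝[>] 0) K := by
  rw [Metric.tendstoUniformlyOn_iff]
  intro δ hδ
  set η := δ / (2 * (|R| + 1))
  obtain ⟨C, hC⟩ := hX.exists_norm_flowDeviation_le hL hbper hB hζ (η := η) (by positivity)
  filter_upwards [Ioo_mem_nhdsGT (show (0 : ℝ) < δ / (2 * (|C| + 1)) by positivity)]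
    with ε ⟨hε, hεδ⟩ q hq
  have hrescale : ε • X (q.1 / ε) (ε⁻¹ • q.2) - (q.2 + q.1 • ζ) =
      ε • flowDeviation X ζ (q.1 / ε) (ε⁻¹ • q.2) := by
    simp only [flowDeviation, smul_sub, smul_smul, mul_inv_cancel₀ hε.ne',
      mul_div_cancel₀ _ hε.ne', one_smul]
    abel
  have hηR : η * q.1 ≤ δ / 2 := by
    calc η * q.1 ≤ η * (|R| + 1) :=
          mul_le_mul_of_nonneg_left (by linarith [(hK q hq).2, le_abs_self R]) (by positivity)
      _ = δ / 2 := by simp only [η]; field_simp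
  have hεC : ε * C < δ / 2 := by
    calc ε * C ≤ ε * (|C| + 1) := mul_le_mul_of_nonneg_left (by linarith [le_abs_self C]) hε.le
      _ < δ / (2 * (|C| + 1)) * (|C| + 1) := by gcongr
      _ = δ / 2 := by field_simp
  rw [dist_comm, dist_eq_norm, hrescale, norm_smul, Real.norm_of_nonneg hε.le]
  calc ε * ‖flowDeviation X ζ (q.1 / ε) (ε⁻¹ • q.2)‖
      ≤ ε * (η * (q.1 / ε) + C) :=
        mul_le_mul_of_nonneg_left (hC _ _ (div_nonneg (hK q hq).1 hε.le)) hε.le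
    _ = η * q.1 + ε * C := by field_simp
    _ < δ := by linarith

end IsFlowOf

end Flow

theorem Continuous.comp_tendstoUniformlyOn_of_isCompact {ι α E γ : Type*} [PseudoMetricSpace E]
    [ProperSpace E] [UniformSpace γ] {g : E → γ} (hg : Continuous g) {l : Filter ι}
    {F : ι → α → E} {f : α → E} {K : Set α} (hfK : IsCompact (f '' K))
    (h : TendstoUniformlyOn F f l K) :
    TendstoUniformlyOn (fun i x => g (F i x)) (fun x => g (f x)) l K := by
  have hF : ∀ᶠ i in l, ∀ x ∈ K, F i x ∈ Metric.cthickening 1 (f '' K) := by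
    filter_upwards [Metric.tendstoUniformlyOn_iff.1 h 1 one_pos] with i hi x hx
    exact Metric.mem_cthickening_of_dist_le _ _ _ _ (mem_image_of_mem f hx)
      (dist_comm (f x) (F i x) ▸ (hi x hx).le)
  exact (hfK.cthickening.uniformContinuousOn_of_continuous hg.continuousOn)
    |>.comp_tendstoUniformlyOn_eventually hF
      (fun x hx => Metric.self_subset_cthickening _ (mem_image_of_mem f hx)) h

theorem tendsto_setIntegral_abs_sub_rpow_of_tendstoUniformlyOn {ι α : Type*} [MeasurableSpace α]
    {μ : Measure α} {l : Filter ι} {G : ι → α → ℝ} {g : α → ℝ} {K : Set α} (hK : μ K < ⊤)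
    {p : ℝ} (hp : 0 < p) (h : TendstoUniformlyOn G g l K) :
    Tendsto (fun i => ∫ x in K, |G i x - g x| ^ p ∂μ) l (𝓝 0) := by
  rw [Metric.tendsto_nhds]
  intro δ hδ
  have hsmall : Tendsto (fun η : ℝ => η ^ p * μ.real K) (𝓝[>] 0) (𝓝 0) := by
    simpa [Real.zero_rpow hp.ne'] using
      ((Real.continuousAt_rpow_const 0 p (Or.inr hp.le)).tendsto.mono_left
        nhdsWithin_le_nhds).mul_const (μ.real K)
  obtain ⟨η, hηδ, hη⟩ := ((hsmall.eventually (gt_mem_nhds hδ)).and self_mem_nhdsWithin).exists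
  filter_upwards [Metric.tendstoUniformlyOn_iff.1 h η hη] with i hi
  have hbound : ∀ x ∈ K, ‖|G i x - g x| ^ p‖ ≤ η ^ p := fun x hx => by
    rw [Real.norm_of_nonneg (by positivity)]
    exact Real.rpow_le_rpow (abs_nonneg _) (by rw [abs_sub_comm]; exact (hi x hx).le) hp.le
  rw [dist_zero_right]
  exact (norm_setIntegral_le_of_norm_le_const hK hbound).trans_lt hηδ

theorem homogenization_of_transport_equation_general {d : ℕ}
    (b : (Fin d → ℝ) → (Fin d → ℝ)) (hb : ContDiff ℝ 1 b) (hbper : ZdPeriodic b)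
    (X : ℝ → (Fin d → ℝ) → (Fin d → ℝ)) (hX : IsFlowOf b X)
    (u0 : (Fin d → ℝ) → ℝ) (hu0 : ContDiff ℝ 1 u0)
    (ζ : Fin d → ℝ)
    (hζ : ∀ x : Fin d → ℝ, Tendsto (fun t : ℝ => t⁻¹ • X t x) atTop (nhds ζ)) :
    ∀ p : ℝ, 1 ≤ p → ∀ K : Set (ℝ × (Fin d → ℝ)), IsCompact K → (∀ q ∈ K, 0 ≤ q.1) →
      Tendsto (fun ε : ℝ =>
          ∫ q in K, |u0 (ε • X (q.1 / ε) (ε⁻¹ • q.2)) - u0 (q.2 + q.1 • ζ)| ^ p)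
        (nhdsWithin 0 (Set.Ioi 0)) (nhds 0) := by
  intro p hp K hK hK0
  obtain ⟨B, hB⟩ := hbper.exists_norm_le hb.continuous
  obtain ⟨L, hL⟩ := hbper.exists_lipschitzWith hb
  obtain ⟨R, hR⟩ := hK.exists_bound_of_continuousOn continuous_fst.continuousOn
  have hrescaled := hX.tendstoUniformlyOn_rescaled hL hbper hB hζ
    fun q hq => ⟨hK0 q hq, (Real.le_norm_self q.1).trans (hR q hq)⟩
  have hlimit : IsCompact ((fun q : ℝ × (Fin d → ℝ) => q.2 + q.1 • ζ) '' K) :=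
    hK.image (by fun_prop)
  exact tendsto_setIntegral_abs_sub_rpow_of_tendstoUniformlyOn hK.measure_lt_top
    (zero_lt_one.trans_le hp)
    (hu0.continuous.comp_tendstoUniformlyOn_of_isCompact hlimit hrescaled)

/-- (Homogenization of the linear transport equation.) Suppose
`X(t,x)/t → ζ` for every `x`. For `ε > 0`, the solution of
`∂u_ε/∂t − b(x/ε)·∇u_ε = 0`, `u_ε(0,·) = u₀`, is `u_ε(t,x) = u₀(ε X(t/ε, x/ε))`; it
converges strongly in `L^p_loc([0,∞)×ℝ^d)` for every `p ∈ [1,∞)`, as `ε → 0⁺`, to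
`(t,x) ↦ u₀(x + tζ)`. -/
theorem homogenization_of_transport_equation {d : ℕ} (hd : 1 ≤ d)
    (b : (Fin d → ℝ) → (Fin d → ℝ)) (hb : ContDiff ℝ 1 b) (hbper : ZdPeriodic b)
    (X : ℝ → (Fin d → ℝ) → (Fin d → ℝ)) (hX : IsFlowOf b X)
    (u0 : (Fin d → ℝ) → ℝ) (hu0 : ContDiff ℝ 1 u0)
    (ζ : Fin d → ℝ)
    (hζ : ∀ x : Fin d → ℝ, Tendsto (fun t : ℝ => t⁻¹ • X t x) atTop (nhds ζ)) :
    ∀ p : ℝ, 1 ≤ p → ∀ K : Set (ℝ × (Fin d → ℝ)), IsCompact K → (∀ q ∈ K, 0 ≤ q.1) →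
      Tendsto (fun ε : ℝ =>
          ∫ q in K, |u0 (ε • X (q.1 / ε) (ε⁻¹ • q.2)) - u0 (q.2 + q.1 • ζ)| ^ p)
        (nhdsWithin 0 (Set.Ioi 0)) (nhds 0) :=
  homogenization_of_transport_equation_general b hb hbper X hX u0 hu0 ζ hζ
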